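/- arXiv:2204.02374 — 2 statements merged into one kernel-verified Lean document; each statement's English description precedes it below -/
import Mathlib

section
/- Let k be a natural number, let r be a decidable relation on Fin k representing the directed edges of a finite directed graph, and let M be the k × k matrix over the natural numbers with M i j = 1 if r i j holds and M i j = 0 otherwise. Then the graph is acyclic (there is no vertex i with (i, i) in the transitive closure of r, i.e. no directed cycle) if and only if for every natural number n ≥ 1 and every vertex i, the diagonal entry (M ^ n) i i equals 0. -/
/-! (M ^ n) i j is the sum, over all walks of length n from i to j, of the products of the
entries along the walk. Over a canonically ordered semiring without zero divisors no
cancellation can occur, so this entry is nonzero exactly when such a walk exists in the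
support relation of M; a cycle is a walk of positive length from a vertex to itself. -/

namespace Matrix

variable {ι R : Type*} [Semiring R] [PartialOrder R] [CanonicallyOrderedAdd R]
  [NoZeroDivisors R]

lemma mul_apply_ne_zero_iff {κ μ : Type*} [Fintype κ] {A : Matrix ι κ R} {B : Matrix κ μ R}
    {i : ι} {j : μ} : (A * B) i j ≠ 0 ↔ ∃ l, A i l ≠ 0 ∧ B l j ≠ 0 := by
  simp [mul_apply, Finset.sum_eq_zero_iff]

theorem transGen_iff_exists_pow_apply_ne_zero [Fintype ι] [DecidableEq ι]
    (M : Matrix ι ι R) {i j : ι} :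
    Relation.TransGen (fun a b ↦ M a b ≠ 0) i j ↔ ∃ n, (M ^ (n + 1)) i j ≠ 0 := by
  constructor
  · intro h
    induction h with
    | single hij => exact ⟨0, by simpa using hij⟩
    | tail _ hlj ih =>
      obtain ⟨n, hn⟩ := ih
      exact ⟨n + 1, by rw [pow_succ, mul_apply_ne_zero_iff]; exact ⟨_, hn, hlj⟩⟩
  · rintro ⟨n, hn⟩
    induction n generalizing j with
    | zero => exact .single (by simpa using hn)
    | succ n ih =>
      rw [pow_succ, mul_apply_ne_zero_iff] at hn
      obtain ⟨l, hil, hlj⟩ := hn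
      exact (ih hil).tail hlj

end Matrix

/-- A directed graph on `Fin k` given by a relation `r` is acyclic (no vertex is related to
itself under the transitive closure of `r`) if and only if every positive power of its
adjacency matrix has zeros on the diagonal. -/
theorem acyclic_iff_matrix_pow_diag_zero (k : ℕ) (r : Fin k → Fin k → Prop)
    [DecidableRel r] (M : Matrix (Fin k) (Fin k) ℕ)
    (hM : ∀ i j, M i j = if r i j then 1 else 0) :
    (¬ ∃ i : Fin k, Relation.TransGen r i i) ↔
      ∀ n : ℕ, 1 ≤ n → ∀ i : Fin k, (M ^ n) i i = 0 := by
  have hr : r = fun i j ↦ M i j ≠ 0 := by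
    funext i j
    simp [hM]
  simp only [hr, Matrix.transGen_iff_exists_pow_apply_ne_zero, not_exists, not_not]
  constructor
  · rintro h (_ | n) hn i
    · omega
    · exact h i n
  · exact fun h i n ↦ h (n + 1) n.succ_pos i
end

section
/- Let (Ω, F, μ) be a standard Borel probability space, let Z : Ω → (Fin p → ℝ) be a measurable random vector, and let ε_1, …, ε_p : Ω → ℝ be real random variables such that the family consisting of the σ-algebra generated by Z together with the σ-algebras generated by each ε_i is mutually independent. Let e_1, …, e_p be real constants and define W_i(ω) = e_i · Z(ω) i + ε_i(ω) for each i. Then the family of random variables (W_1, …, W_p) is mutually conditionally independent given the σ-algebra generated by Z. -/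
/-!
Each `W i` is measurable for `σ(Z) ⊔ σ(ε i)`, so it suffices that these σ-algebras are
conditionally independent given `σ(Z)`. Test this on the π-systems of intersections `A ∩ B` with
`A ∈ σ(Z)`, `B ∈ σ(ε i)`: since `⋂ B_i` is independent of `σ(Z)`, the conditional probability of
`⋂ (A_i ∩ B_i)` is `1_{⋂ A_i} · μ(⋂ B_i)`, and `μ(⋂ B_i) = ∏ μ(B_i)` makes it factor.
-/

open MeasureTheory ProbabilityTheory MeasurableSpace Set

section

variable {Ω : Type*}

theorem isPiSystem_image2_inter {S T : Set (Set Ω)} (hS : IsPiSystem S) (hT : IsPiSystem T) :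
    IsPiSystem (image2 (· ∩ ·) S T) := by
  rintro _ ⟨s₁, hs₁, t₁, ht₁, rfl⟩ _ ⟨s₂, hs₂, t₂, ht₂, rfl⟩ hne
  rw [inter_inter_inter_comm]
  exact mem_image2_of_mem (hS _ hs₁ _ hs₂ (hne.mono fun _ hx ↦ ⟨hx.1.1, hx.2.1⟩))
    (hT _ ht₁ _ ht₂ (hne.mono fun _ hx ↦ ⟨hx.1.2, hx.2.2⟩))

theorem generateFrom_image2_inter (m₁ m₂ : MeasurableSpace Ω) :
    generateFrom (image2 (· ∩ ·) {s | MeasurableSet[m₁] s} {t | MeasurableSet[m₂] t})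
      = m₁ ⊔ m₂ := by
  refine le_antisymm (generateFrom_le ?_) (sup_le (fun s hs ↦ ?_) (fun t ht ↦ ?_))
  · rintro _ ⟨s, hs, t, ht, rfl⟩
    exact (le_sup_left (a := m₁) _ hs).inter (le_sup_right (a := m₁) _ ht)
  · exact measurableSet_generateFrom ⟨s, hs, univ, .univ, inter_univ s⟩
  · exact measurableSet_generateFrom ⟨univ, .univ, t, ht, univ_inter t⟩

end

namespace ProbabilityTheory

variable {Ω ι : Type*} {mΩ : MeasurableSpace Ω} {μ : Measure Ω}

theorem condExp_inter_ae_eq_of_indep [IsFiniteMeasure μ] {m m' : MeasurableSpace Ω}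
    (hm : m ≤ mΩ) (hm' : m' ≤ mΩ) (hindep : Indep m' m μ) {A B : Set Ω}
    (hA : MeasurableSet[m] A) (hB : MeasurableSet[m'] B) :
    μ⟦A ∩ B | m⟧ =ᵐ[μ] A.indicator fun _ ↦ μ.real B :=
  calc μ⟦A ∩ B | m⟧ = μ[A.indicator (B.indicator 1) | m] := by
        rw [indicator_indicator]; rfl
    _ =ᵐ[μ] A.indicator μ[B.indicator 1 | m] :=
        condExp_indicator ((integrable_const 1).indicator (hm' _ hB)) hA
    _ =ᵐ[μ] A.indicator fun _ ↦ μ.real B := by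
        refine Filter.EventuallyEq.indicator ?_
        rw [← integral_indicator_one (hm' _ hB)]
        exact condExp_indep_eq hm' hm (stronglyMeasurable_one.indicator hB) hindep

theorem iCondIndep.iCondIndepFun_of_measurable [StandardBorelSpace Ω] [IsFiniteMeasure μ]
    {β : ι → Type*} [∀ i, MeasurableSpace (β i)]
    {m : MeasurableSpace Ω} {hm : m ≤ mΩ} {M : ι → MeasurableSpace Ω} (h : iCondIndep m hm M μ)
    {f : ∀ i, Ω → β i} (hf : ∀ i, Measurable[M i] (f i)) :
    iCondIndepFun m hm f μ :=
  (iCondIndepFun_iff_iCondIndep _ _ _ _ _).2 <|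
    Kernel.iIndep_of_iIndep_of_le h fun i ↦ (hf i).comap_le

theorem iIndep.indep_biSup_option {m : MeasurableSpace Ω} {M : ι → MeasurableSpace Ω}
    (hm : m ≤ mΩ) (hM : ∀ i, M i ≤ mΩ) (h : iIndep (fun o : Option ι ↦ o.elim m M) μ)
    (S : Set ι) : Indep (⨆ i ∈ S, M i) m μ := by
  have := indep_iSup_of_disjoint (Option.rec hm hM) h (S := some '' S) (T := {none}) (by simp)
  rwa [iSup_image, iSup_singleton] at this

theorem iIndep.condExp_biInter_inter_ae_eq_prod [IsFiniteMeasure μ]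
    {m : MeasurableSpace Ω} {M : ι → MeasurableSpace Ω} (hm : m ≤ mΩ) (hM : ∀ i, M i ≤ mΩ)
    (h : iIndep (fun o : Option ι ↦ o.elim m M) μ) (S : Finset ι) {a b : ι → Set Ω}
    (ha : ∀ i ∈ S, MeasurableSet[m] (a i)) (hb : ∀ i ∈ S, MeasurableSet[M i] (b i)) :
    μ⟦⋂ i ∈ S, (a i ∩ b i) | m⟧ =ᵐ[μ] ∏ i ∈ S, μ⟦a i ∩ b i | m⟧ := by
  have hindepS := h.indep_biSup_option hm hM S
  have hle : ⨆ j ∈ (S : Set ι), M j ≤ mΩ := iSup₂_le fun j _ ↦ hM j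
  have hbS : ∀ i ∈ S, MeasurableSet[⨆ j ∈ (S : Set ι), M j] (b i) := fun i hi ↦
    le_biSup M (Finset.mem_coe.2 hi) _ (hb i hi)
  have hprod : μ.real (⋂ i ∈ S, b i) = ∏ i ∈ S, μ.real (b i) := by
    simp only [measureReal_def, (h.precomp (Option.some_injective ι)).meas_biInter hb,
      ENNReal.toReal_prod]
  have hfactor : ∀ᵐ ω ∂μ, ∀ i ∈ S,
      (μ⟦a i ∩ b i | m⟧) ω = (a i).indicator (fun _ ↦ μ.real (b i)) ω :=
    (Filter.eventually_all_finset S).2 fun i hi ↦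
      condExp_inter_ae_eq_of_indep hm hle hindepS (ha i hi) (hbS i hi)
  calc μ⟦⋂ i ∈ S, (a i ∩ b i) | m⟧ = μ⟦(⋂ i ∈ S, a i) ∩ ⋂ i ∈ S, b i | m⟧ := by
        simp only [iInter_inter_distrib]
    _ =ᵐ[μ] (⋂ i ∈ S, a i).indicator fun _ ↦ μ.real (⋂ i ∈ S, b i) :=
        condExp_inter_ae_eq_of_indep hm hle hindepS
          (Finset.measurableSet_biInter S ha) (Finset.measurableSet_biInter S hbS)
    _ = ∏ i ∈ S, (a i).indicator fun _ ↦ μ.real (b i) := by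
        rw [hprod, prod_indicator, Finset.prod_fn]
    _ =ᵐ[μ] ∏ i ∈ S, μ⟦a i ∩ b i | m⟧ := hfactor.mono fun ω hω ↦ by
        simp only [Finset.prod_apply]
        exact Finset.prod_congr rfl fun i hi ↦ (hω i hi).symm

theorem iIndep.iCondIndep_sup_option [StandardBorelSpace Ω] [IsFiniteMeasure μ]
    {m : MeasurableSpace Ω} {M : ι → MeasurableSpace Ω} (hm : m ≤ mΩ) (hM : ∀ i, M i ≤ mΩ)
    (h : iIndep (fun o : Option ι ↦ o.elim m M) μ) :
    iCondIndep m hm (fun i ↦ m ⊔ M i) μ := by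
  refine iCondIndepSets.iCondIndep _ (fun i ↦ sup_le hm (hM i))
    (fun i ↦ image2 (· ∩ ·) {s | MeasurableSet[m] s} {t | MeasurableSet[M i] t})
    (fun i ↦ isPiSystem_image2_inter (@isPiSystem_measurableSet _ m)
      (@isPiSystem_measurableSet _ (M i)))
    (fun i ↦ (generateFrom_image2_inter m (M i)).symm) ?_
  rw [iCondIndepSets_iff]
  swap
  · rintro i _ ⟨a, ha, b, hb, rfl⟩
    exact (hm _ ha).inter (hM i _ hb)
  intro S s hs
  choose! a ha b hb hab using hs
  change ∀ i ∈ S, a i ∩ b i = s i at hab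
  calc μ⟦⋂ i ∈ S, s i | m⟧ = μ⟦⋂ i ∈ S, (a i ∩ b i) | m⟧ := by rw [iInter₂_congr hab]
    _ =ᵐ[μ] ∏ i ∈ S, μ⟦a i ∩ b i | m⟧ := h.condExp_biInter_inter_ae_eq_prod hm hM S ha hb
    _ = ∏ i ∈ S, μ⟦s i | m⟧ := Finset.prod_congr rfl fun i hi ↦ by rw [hab i hi]

end ProbabilityTheory

/-- If the σ-algebra generated by `Z` and the σ-algebras generated by the shocks `ε i` form a
mutually independent family, then the AR(1) updates `W i = e i * Z i + ε i` are mutually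
conditionally independent given the σ-algebra generated by `Z`. -/
theorem iCondIndepFun_exogenous_states
    {Ω : Type*} [MeasurableSpace Ω] [StandardBorelSpace Ω]
    (μ : Measure Ω) [IsProbabilityMeasure μ]
    {p : ℕ}
    (Z : Ω → (Fin p → ℝ)) (hZ : Measurable Z)
    (ε : Fin p → Ω → ℝ) (hε : ∀ i, Measurable (ε i))
    (hindep : iIndep
      (fun o : Option (Fin p) =>
        o.elim (MeasurableSpace.comap Z inferInstance)
          (fun i => MeasurableSpace.comap (ε i) inferInstance)) μ)
    (e : Fin p → ℝ)
    (W : Fin p → Ω → ℝ) (hW : ∀ i ω, W i ω = e i * Z ω i + ε i ω) :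
    iCondIndepFun (MeasurableSpace.comap Z inferInstance)
      (measurable_iff_comap_le.mp hZ) W μ := by
  refine (hindep.iCondIndep_sup_option hZ.comap_le fun i ↦ (hε i).comap_le)
    |>.iCondIndepFun_of_measurable fun i ↦ ?_
  rw [funext (hW i)]
  refine (measurable_const.mul ?_).add ((comap_measurable (ε i)).mono le_sup_right le_rfl)
  exact (measurable_pi_apply i).comp ((comap_measurable Z).mono le_sup_left le_rfl)
end
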